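/- Let p be a prime, m ≥ 1, d = 2^l and k = 2^m powers of 2, and suppose i₀, i₁, …, i_{m-1} ≥ 0 are integers with i₀ ≤ d − 2 and (2^m − 2^0)i₀ + (2^m − 2^1)i₁ + ⋯ + (2^m − 2^{m-1})i_{m-1} = (d−1)(k−1). Then the multinomial coefficient (i₀ + i₁ + ⋯ + i_{m-1})! / (i₀! i₁! ⋯ i_{m-1}!) is even. -/

import Mathlib

/-!
Let `2^t` be the exact power of `2` dividing `i₀ + 1`; then `t < l` because `i₀ + 1 < d`.
If some `i_b` with `b ≥ 1` is not divisible by `2^t`, adding it to `i₀ = 2^t a - 1`, whose last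
`t` binary digits are all `1`, produces a carry, so `C(i₀ + i_b, i₀)` is even by Kummer's theorem,
and it divides the multinomial coefficient. Otherwise the displayed equation can be rewritten as
`i₀ + 1 = k (∑ i_b + 1) - d (k - 1) - ∑_{b ≥ 1} 2^b i_b`, whose right-hand side is divisible by
`2^(t+1)`, contradicting the choice of `t`.
-/

open Finset

theorem Nat.mod_eq_sub_one_of_dvd_add_one {x q : ℕ} (hq : 0 < q) (hx : q ∣ x + 1) :
    x % q = q - 1 := by
  have h : q ∣ x % q + 1 :=
    (Nat.dvd_add_right (dvd_mul_right q (x / q))).1 (by rwa [← add_assoc, Nat.div_add_mod])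
  have := Nat.le_of_dvd (Nat.succ_pos _) h
  have := Nat.mod_lt x hq
  omega

theorem Nat.choose_dvd_multinomial {α : Type*} [DecidableEq α] {s : Finset α} {a b : α}
    (ha : a ∈ s) (hb : b ∈ s) (hab : a ≠ b) (f : α → ℕ) :
    (f a + f b).choose (f a) ∣ Nat.multinomial s f := by
  set r := (s.erase a).erase b
  have hbr : b ∉ r := notMem_erase b _
  have har : a ∉ insert b r := by simp [r, hab]
  have hs : s = insert a (insert b r) := by
    rw [insert_erase (mem_erase.2 ⟨hab.symm, hb⟩), insert_erase ha]
  have hchoose : (f a + (f b + ∑ x ∈ r, f x)).choose (f a) * (f b + ∑ x ∈ r, f x).choose (f b) =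
      (f a + f b + ∑ x ∈ r, f x).choose (f a + f b) * (f a + f b).choose (f a) := by
    rw [Nat.choose_mul (Nat.le_add_right _ _), Nat.add_sub_cancel_left, add_assoc,
      Nat.add_sub_cancel_left]
  rw [hs, Nat.multinomial_insert har, Nat.multinomial_insert hbr, sum_insert hbr, ← mul_assoc,
    hchoose]
  exact (dvd_mul_left _ _).mul_right _

theorem Nat.Prime.dvd_choose_add_of_pow_dvd_add_one {p t x y : ℕ} (hp : p.Prime)
    (hx : p ^ t ∣ x + 1) (hy : ¬ p ^ t ∣ y) : p ∣ (x + y).choose y := by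
  have := Fact.mk hp
  have ht : t ≠ 0 := by rintro rfl; exact hy (one_dvd y)
  have hxmod : x % p ^ t = p ^ t - 1 := Nat.mod_eq_sub_one_of_dvd_add_one (pow_pos hp.pos t) hx
  have hymod : 0 < y % p ^ t := Nat.pos_of_ne_zero fun h => hy (Nat.dvd_of_mod_eq_zero h)
  have hcarry : t ∈ {i ∈ Ico 1 (t + Nat.log p (x + y) + 1) | p ^ i ≤ y % p ^ i + x % p ^ i} :=
    mem_filter.2 ⟨mem_Ico.2 ⟨by omega, by omega⟩, by omega⟩
  apply dvd_of_one_le_padicValNat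
  rw [padicValNat_choose' (by omega : Nat.log p (x + y) < t + Nat.log p (x + y) + 1)]
  exact Finset.card_pos.2 ⟨t, hcarry⟩

theorem pow_succ_dvd_add_one_of_weighted_sum {n l t x : ℕ} {y : Fin n → ℕ} (htl : t < l)
    (hx : 2 ^ t ∣ x + 1) (hy : ∀ j, 2 ^ t ∣ y j)
    (hsum : (2 ^ (n + 1) - 1) * x + ∑ j : Fin n, (2 ^ (n + 1) - 2 ^ ((j : ℕ) + 1)) * y j =
      (2 ^ l - 1) * (2 ^ (n + 1) - 1)) :
    2 ^ (t + 1) ∣ x + 1 := by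
  have hweight (j : Fin n) : ((2 ^ (n + 1) - 2 ^ ((j : ℕ) + 1) : ℕ) : ℤ) =
      2 ^ (n + 1) - 2 ^ ((j : ℕ) + 1) :=
    Nat.cast_sub (Nat.pow_le_pow_right two_pos (by omega))
  have hsumℤ := congrArg (Nat.cast : ℕ → ℤ) hsum
  push_cast [Nat.cast_sub Nat.one_le_two_pow, hweight] at hsumℤ
  simp only [sub_mul, sum_sub_distrib, ← mul_sum] at hsumℤ
  have key : ((x + 1 : ℕ) : ℤ) = 2 ^ (n + 1) * ((x + 1 + ∑ j, y j : ℕ) : ℤ) -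
      2 ^ l * (2 ^ (n + 1) - 1) - ∑ j : Fin n, 2 ^ ((j : ℕ) + 1) * (y j : ℤ) := by
    push_cast
    linear_combination -hsumℤ
  have h₁ : (2 : ℤ) ^ (t + 1) ∣ 2 ^ (n + 1) * ((x + 1 + ∑ j, y j : ℕ) : ℤ) := by
    rw [pow_succ']
    exact mul_dvd_mul (dvd_pow_self 2 n.succ_ne_zero)
      (Int.natCast_dvd_natCast.2 (dvd_add hx (dvd_sum fun j _ => hy j)))
  have h₂ : (2 : ℤ) ^ (t + 1) ∣ 2 ^ l * (2 ^ (n + 1) - 1) :=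
    (pow_dvd_pow 2 htl).mul_right _
  have h₃ : (2 : ℤ) ^ (t + 1) ∣ ∑ j : Fin n, 2 ^ ((j : ℕ) + 1) * (y j : ℤ) := by
    refine dvd_sum fun j _ => ?_
    have hyj : (2 : ℤ) ^ t ∣ y j := by exact_mod_cast hy j
    rw [show (2 : ℤ) ^ ((j : ℕ) + 1) * y j = 2 ^ (j : ℕ) * (y j * 2) by ring, pow_succ]
    exact (mul_dvd_mul_right hyj 2).mul_left _
  exact_mod_cast key ▸ dvd_sub (dvd_sub h₁ h₂) h₃

theorem stmt_13 (l m : ℕ) (hl : 1 ≤ l) (hm : 1 ≤ m)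
    (i : Fin m → ℕ) (h0 : i ⟨0, by omega⟩ ≤ 2 ^ l - 2)
    (hsum : ∑ b : Fin m, (2 ^ m - 2 ^ (b : ℕ)) * i b = (2 ^ l - 1) * (2 ^ m - 1)) :
    2 ∣ Nat.multinomial Finset.univ i := by
  obtain ⟨n, rfl⟩ := Nat.exists_eq_add_of_le' hm
  rw [Fin.sum_univ_succ] at hsum
  simp only [Fin.val_zero, pow_zero, Fin.val_succ] at hsum
  replace h0 : i 0 ≤ 2 ^ l - 2 := h0
  set t := padicValNat 2 (i 0 + 1)
  have hx : 2 ^ t ∣ i 0 + 1 := pow_padicValNat_dvd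
  have htl : t < l := by
    have := Nat.le_of_dvd (Nat.succ_pos _) hx
    have := Nat.one_lt_two_pow_iff.2 (by omega : l ≠ 0)
    exact (Nat.pow_lt_pow_iff_right (a := 2) (by norm_num)).1 (by omega)
  by_cases hy : ∀ j : Fin n, 2 ^ t ∣ i j.succ
  · exact absurd (pow_succ_dvd_add_one_of_weighted_sum htl hx hy hsum)
      (pow_succ_padicValNat_not_dvd (Nat.succ_ne_zero _))
  · obtain ⟨j, hj⟩ := not_forall.1 hy
    exact (Nat.prime_two.dvd_choose_add_of_pow_dvd_add_one hx hj).trans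
      (Nat.choose_symm_add ▸ Nat.choose_dvd_multinomial (mem_univ _) (mem_univ _)
        (Fin.succ_ne_zero j).symm i)
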